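/- arXiv:2210.10592 — 7 statements merged into one kernel-verified Lean document; each statement's English description precedes it below -/
import Mathlib

section
/- Define R(p, l) = 2p·l·(1-p)^{l-1} + (1-p)^{2l} − 1. For every natural number l ≥ 3 and every real p with 2/(l+2) ≤ p < 1, we have R(p, l) ≤ 0. -/
/-!
Put `s = (l / (l + 2)) ^ l`. Weighted AM–GM applied to one factor `l p / 2` and `l - 1` factors
`1 - p` gives `2 p l (1 - p) ^ (l - 1) ≤ 4 s`: the hypothesis `2 / (l + 2) ≤ p` is exactly what
makes the arithmetic mean at most `l / (l + 2)`. The same hypothesis gives `(1 - p) ^ (2 l) ≤ s ^ 2`.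
Finally `s = ((1 + 2 / l) ^ l)⁻¹` and `(1 + x / n) ^ n` increases with `n` (AM–GM once more), so
`s ≤ 27 / 125`, and then `4 s + s ^ 2 < 1`.
-/

theorem mul_pow_le_mean_pow (n : ℕ) {a b : ℝ} (ha : 0 ≤ a) (hb : 0 ≤ b) :
    a * b ^ n ≤ ((a + n * b) / (n + 1)) ^ (n + 1) := by
  have hn : (0 : ℝ) < n + 1 := by positivity
  have amgm := Real.geom_mean_le_arith_mean2_weighted (p₁ := a) (p₂ := b)
    (inv_nonneg.2 hn.le) (div_nonneg n.cast_nonneg hn.le) ha hb (by field_simp; ring)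
  have hpow : (a ^ (n + 1 : ℝ)⁻¹ * b ^ ((n : ℝ) / (n + 1))) ^ (n + 1) = a * b ^ n := by
    rw [mul_pow, ← Real.rpow_natCast, ← Real.rpow_natCast (b ^ _), ← Real.rpow_mul ha,
      ← Real.rpow_mul hb]
    push_cast
    rw [inv_mul_cancel₀ hn.ne', div_mul_cancel₀ _ hn.ne', Real.rpow_one, Real.rpow_natCast]
  calc a * b ^ n = (a ^ (n + 1 : ℝ)⁻¹ * b ^ ((n : ℝ) / (n + 1))) ^ (n + 1) := hpow.symm
    _ ≤ ((n + 1 : ℝ)⁻¹ * a + (n : ℝ) / (n + 1) * b) ^ (n + 1) :=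
      pow_le_pow_left₀ (by positivity) amgm _
    _ = ((a + n * b) / (n + 1)) ^ (n + 1) := by ring

theorem monotone_one_add_div_pow {x : ℝ} (hx : 0 ≤ x) :
    Monotone fun n : ℕ ↦ (1 + x / n) ^ n := by
  refine monotone_nat_of_le_succ fun n ↦ ?_
  rcases n.eq_zero_or_pos with rfl | hn
  · simpa using hx
  have hn' : (n : ℝ) ≠ 0 := by positivity
  calc (1 + x / n) ^ n = 1 * (1 + x / n) ^ n := (one_mul _).symm
    _ ≤ ((1 + n * (1 + x / n)) / (n + 1)) ^ (n + 1) :=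
      mul_pow_le_mean_pow n zero_le_one (by positivity)
    _ = (1 + x / ↑(n + 1)) ^ (n + 1) := by
      push_cast
      field_simp
      ring

theorem div_add_two_pow_le_of_three_le {l : ℕ} (hl : 3 ≤ l) :
    ((l : ℝ) / (l + 2)) ^ l ≤ 27 / 125 := by
  have hl0 : (l : ℝ) ≠ 0 := by positivity
  have eq_inv : ((l : ℝ) / (l + 2)) ^ l = ((1 + 2 / (l : ℝ)) ^ l)⁻¹ := by
    rw [← inv_pow]
    congr 1
    field_simp
  have hmono := monotone_one_add_div_pow zero_le_two hl
  norm_num at hmono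
  rw [eq_inv]
  calc ((1 + 2 / (l : ℝ)) ^ l)⁻¹ ≤ (125 / 27)⁻¹ := inv_anti₀ (by norm_num) hmono
    _ = 27 / 125 := by norm_num

theorem mul_natCast_mul_one_sub_pow_le {l : ℕ} (hl : 2 ≤ l) {p : ℝ}
    (hp : 2 / ((l : ℝ) + 2) ≤ p) (hp1 : p ≤ 1) :
    p * l * (1 - p) ^ (l - 1) ≤ 2 * ((l : ℝ) / (l + 2)) ^ l := by
  obtain ⟨n, rfl⟩ : ∃ n, l = n + 1 := ⟨l - 1, by omega⟩
  have hn : (1 : ℝ) ≤ n := by exact_mod_cast (by omega : 1 ≤ n)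
  rw [Nat.add_sub_cancel]
  push_cast at hp ⊢
  have hp' : 2 ≤ p * (n + 3) := by
    rw [div_le_iff₀ (by positivity)] at hp
    linarith
  have mean_le : (((n + 1) / 2 * p + n * (1 - p)) / (n + 1)) ≤ (n + 1) / (n + 1 + 2) := by
    rw [div_le_div_iff₀ (by positivity) (by positivity)]
    nlinarith
  have hp0 : 0 ≤ p := le_trans (by positivity) hp
  have amgm := mul_pow_le_mean_pow n (a := (n + 1) / 2 * p) (b := 1 - p)
    (by positivity) (by linarith)
  calc p * (n + 1) * (1 - p) ^ n = 2 * ((n + 1) / 2 * p * (1 - p) ^ n) := by ring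
    _ ≤ 2 * ((n + 1) / (n + 1 + 2)) ^ (n + 1) := by
      gcongr
      refine amgm.trans (pow_le_pow_left₀ ?_ mean_le _)
      exact div_nonneg (by nlinarith) (by positivity)

theorem R_nonpos (l : ℕ) (hl : 3 ≤ l) (p : ℝ)
    (hp : 2 / ((l : ℝ) + 2) ≤ p) (hp1 : p < 1) :
    2 * p * (l : ℝ) * (1 - p) ^ (l - 1) + (1 - p) ^ (2 * l) - 1 ≤ 0 := by
  set s := ((l : ℝ) / (l + 2)) ^ l
  have hs : s ≤ 27 / 125 := div_add_two_pow_le_of_three_le hl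
  have first_le := mul_natCast_mul_one_sub_pow_le (by omega) hp hp1.le
  have one_sub_le : 1 - p ≤ l / (l + 2) := by
    rw [div_le_iff₀ (by positivity)] at hp
    rw [le_div_iff₀ (by positivity)]
    nlinarith
  have second_le : (1 - p) ^ (2 * l) ≤ s ^ 2 := by
    rw [mul_comm, pow_mul]
    exact pow_le_pow_left₀ (by positivity) (pow_le_pow_left₀ (by linarith) one_sub_le _) _
  nlinarith [show 0 ≤ s by positivity]
end

section
/- Define R(p, l) = 2p·l·(1-p)^{l-1} + (1-p)^{2l} − 1 for real p ∈ (0,1) and real l ≥ 3. If 2/(l+2) ≤ p < 1, then the partial derivative of R with respect to p is nonpositive: ∂R/∂p = 2l(1-p)^{l-2}(1 − p·l) − 2l(1-p)^{2l-1} ≤ 0. -/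
/-! Both terms of the derivative are signed: `2l(1-p)^(l-2)(1 - pl) ≤ 0` because the threshold
`p ≥ 2/(l+2)` forces `pl ≥ 2l/(l+2) ≥ 1` once `l ≥ 2`, and `2l(1-p)^(2l-1) ≥ 0`. -/

open Real

lemma one_le_mul_of_two_div_add_two_le {p l : ℝ} (hl : 2 ≤ l) (hp : 2 / (l + 2) ≤ p) :
    1 ≤ p * l := by
  have hl2 : 0 < l + 2 := by linarith
  calc 1 ≤ 2 / (l + 2) * l := by
        rw [div_mul_eq_mul_div, le_div_iff₀ hl2]
        linarith
    _ ≤ p * l := mul_le_mul_of_nonneg_right hp (by linarith)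

lemma hasDerivAt_two_mul_mul_one_sub_rpow_add_one_sub_rpow {p : ℝ} (l : ℝ) (hp : p < 1) :
    HasDerivAt (fun q : ℝ => 2 * q * l * (1 - q) ^ (l - 1) + (1 - q) ^ (2 * l) - 1)
      (2 * l * (1 - p) ^ (l - 2) * (1 - p * l) - 2 * l * (1 - p) ^ (2 * l - 1)) p := by
  have hbase : 0 < 1 - p := by linarith
  have hsub : HasDerivAt (fun q : ℝ => 1 - q) (-1) p := (hasDerivAt_id p).const_sub 1
  have hlin : HasDerivAt (fun q : ℝ => 2 * q * l) (2 * l) p := by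
    simpa using ((hasDerivAt_id p).const_mul 2).mul_const l
  have hsum := ((hlin.mul (hsub.rpow_const (p := l - 1) (Or.inl hbase.ne'))).add
    (hsub.rpow_const (p := 2 * l) (Or.inl hbase.ne'))).sub_const 1
  refine hsum.congr_deriv ?_
  have hsplit : (1 - p) ^ (l - 1) = (1 - p) ^ (l - 2) * (1 - p) := by
    rw [show l - 1 = (l - 2) + 1 by ring, rpow_add hbase, rpow_one]
  rw [show l - 1 - 1 = l - 2 by ring, hsplit]
  ring

lemma two_mul_mul_rpow_mul_one_sub_sub_nonpos {p l : ℝ} (hp : p < 1) (hl : 0 ≤ l)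
    (hpl : 1 ≤ p * l) :
    2 * l * (1 - p) ^ (l - 2) * (1 - p * l) - 2 * l * (1 - p) ^ (2 * l - 1) ≤ 0 := by
  have hbase : 0 ≤ 1 - p := by linarith
  have hfirst : 2 * l * (1 - p) ^ (l - 2) * (1 - p * l) ≤ 0 :=
    mul_nonpos_of_nonneg_of_nonpos (by positivity) (by linarith)
  have hsecond : 0 ≤ 2 * l * (1 - p) ^ (2 * l - 1) := by positivity
  linarith

open Real in
theorem dR_dp_nonpos_general (p l : ℝ) (hp1 : p < 1) (hl : 3 ≤ l)
    (hp : 2 / (l + 2) ≤ p) :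
    HasDerivAt (fun q : ℝ => 2 * q * l * (1 - q) ^ (l - 1) + (1 - q) ^ (2 * l) - 1)
      (2 * l * (1 - p) ^ (l - 2) * (1 - p * l) - 2 * l * (1 - p) ^ (2 * l - 1)) p ∧
    2 * l * (1 - p) ^ (l - 2) * (1 - p * l) - 2 * l * (1 - p) ^ (2 * l - 1) ≤ 0 :=
  ⟨hasDerivAt_two_mul_mul_one_sub_rpow_add_one_sub_rpow l hp1,
    two_mul_mul_rpow_mul_one_sub_sub_nonpos hp1 (by linarith)
      (one_le_mul_of_two_div_add_two_le (by linarith) hp)⟩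

open Real in
theorem dR_dp_nonpos (p l : ℝ) (hp0 : 0 < p) (hp1 : p < 1) (hl : 3 ≤ l)
    (hp : 2 / (l + 2) ≤ p) :
    HasDerivAt (fun q : ℝ => 2 * q * l * (1 - q) ^ (l - 1) + (1 - q) ^ (2 * l) - 1)
      (2 * l * (1 - p) ^ (l - 2) * (1 - p * l) - 2 * l * (1 - p) ^ (2 * l - 1)) p ∧
    2 * l * (1 - p) ^ (l - 2) * (1 - p * l) - 2 * l * (1 - p) ^ (2 * l - 1) ≤ 0 :=
  dR_dp_nonpos_general p l hp1 hl hp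
end

section
/- Let p ∈ (0,1), let l ≥ 3 be a natural number with 2/(l+2) ≤ p, and define A(l) = p·l·(1-p)^{l-1} − (1-p)^l + (1-p)^{2l}. Then A(l+1) ≤ (1-p)·A(l) + p(1-p)^l. -/
theorem A_recursive_bound (p : ℝ) (hp0 : 0 < p) (hp1 : p < 1)
    (l : ℕ) (hl : 3 ≤ l) (hp : 2 / ((l : ℝ) + 2) ≤ p) :
    p * ((l : ℝ) + 1) * (1 - p) ^ l - (1 - p) ^ (l + 1) + (1 - p) ^ (2 * (l + 1)) ≤
      (1 - p) * (p * (l : ℝ) * (1 - p) ^ (l - 1) - (1 - p) ^ l + (1 - p) ^ (2 * l)) +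
        p * (1 - p) ^ l := by
  obtain ⟨k, rfl⟩ : ∃ k, l = k + 1 := ⟨l - 1, by omega⟩
  have hq0 : (0:ℝ) ≤ 1 - p := by linarith
  have hq1 : (1:ℝ) - p ≤ 1 := by linarith
  have hpow : (1 - p) ^ (2 * (k + 1) + 2) ≤ (1 - p) ^ (2 * (k + 1) + 1) :=
    pow_le_pow_of_le_one hq0 hq1 (by omega)
  simp only [Nat.add_sub_cancel]
  push_cast
  ring_nf
  ring_nf at hpow
  nlinarith [hpow]
end

section
/- Let p ∈ (0,1) and let l ≥ 3 be a natural number with 2/(l+2) ≤ p < 1. Define A(l) = p·l·(1-p)^{l-1} − (1-p)^l + (1-p)^{2l}. Then A(l) > 0 and A(l+1)/A(l) ≤ 1, i.e., A is nonincreasing at l. -/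
theorem A_pos_and_nonincreasing (p : ℝ) (hp0 : 0 < p) (hp1 : p < 1)
    (l : ℕ) (hl : 3 ≤ l) (hp : 2 / ((l : ℝ) + 2) ≤ p) :
    (p * (l : ℝ) * (1 - p) ^ (l - 1) - (1 - p) ^ l + (1 - p) ^ (2 * l) > 0) ∧
    (p * ((l : ℝ) + 1) * (1 - p) ^ l - (1 - p) ^ (l + 1) + (1 - p) ^ (2 * (l + 1))) /
      (p * (l : ℝ) * (1 - p) ^ (l - 1) - (1 - p) ^ l + (1 - p) ^ (2 * l)) ≤ 1 := by
  have hq0 : (0:ℝ) < 1 - p := by linarith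
  have h2 : (0:ℝ) < (l : ℝ) + 2 := by positivity
  have hlp : 2 ≤ p * ((l : ℝ) + 2) := by
    have := (div_le_iff₀ h2).mp hp; linarith
  have hpowl : (1 - p) ^ l = (1 - p) ^ (l - 1) * (1 - p) := by
    rw [← pow_succ]; congr 1; omega
  have hpowl1 : (1 - p) ^ (l + 1) = (1 - p) ^ (l - 1) * (1 - p) ^ 2 := by
    rw [← pow_add]; congr 1; omega
  have hpow2 : (1 - p) ^ (2 * (l + 1)) = (1 - p) ^ (2 * l) * (1 - p) ^ 2 := by
    rw [← pow_add]; congr 1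
  have hq1 : (0:ℝ) < (1 - p) ^ (l - 1) := pow_pos hq0 _
  have hq2 : (0:ℝ) < (1 - p) ^ (2 * l) := pow_pos hq0 _
  have hplq : 0 < p * (l : ℝ) - (1 - p) := by nlinarith
  have hA : p * (l : ℝ) * (1 - p) ^ (l - 1) - (1 - p) ^ l + (1 - p) ^ (2 * l) > 0 := by
    rw [hpowl]
    nlinarith [mul_pos hq1 hplq]
  refine ⟨hA, ?_⟩
  rw [div_le_one hA]
  have key : (p * (l : ℝ) * (1 - p) ^ (l - 1) - (1 - p) ^ l + (1 - p) ^ (2 * l))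
      - (p * ((l : ℝ) + 1) * (1 - p) ^ l - (1 - p) ^ (l + 1) + (1 - p) ^ (2 * (l + 1)))
      = (1 - p) ^ (l - 1) * p * (p * ((l : ℝ) + 2) - 2)
        + (1 - p) ^ (2 * l) * (1 - (1 - p) ^ 2) := by
    rw [hpowl, hpowl1, hpow2]; ring
  nlinarith [mul_nonneg (mul_nonneg hq1.le hp0.le) (by linarith : (0:ℝ) ≤ p * ((l:ℝ)+2) - 2),
    mul_pos hq2 (by nlinarith : (0:ℝ) < 1 - (1 - p) ^ 2)]
end

section
/- Let p ∈ (0,1) and let l ≥ 3 be a natural number with 2/(l+2) ≤ p < 1. With Pr(X=1|L=l) = (p·l·(1-p)^{l-1} − (1-p)^l + (1-p)^{2l}) / (1−(1-p)^l)^2, the inequality Pr(X=1|L=l+1) ≤ Pr(X=1|L=l) holds. -/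
set_option maxHeartbeats 1600000

theorem overlap_prob_nonincreasing (p : ℝ) (hp0 : 0 < p) (hp1 : p < 1)
    (l : ℕ) (hl : 3 ≤ l) (hp : 2 / ((l : ℝ) + 2) ≤ p) :
    (p * ((l : ℝ) + 1) * (1 - p) ^ l - (1 - p) ^ (l + 1) + (1 - p) ^ (2 * (l + 1))) /
        (1 - (1 - p) ^ (l + 1)) ^ 2 ≤
      (p * (l : ℝ) * (1 - p) ^ (l - 1) - (1 - p) ^ l + (1 - p) ^ (2 * l)) /
        (1 - (1 - p) ^ l) ^ 2 := by
  set q : ℝ := 1 - p with hq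
  have hq0 : 0 < q := by simp [hq]; linarith
  have hq1 : q < 1 := by simp [hq]; linarith
  set a : ℝ := q ^ (l - 1) with haa
  have ha0 : 0 < a := pow_pos hq0 _
  have haq2 : a ≤ q ^ 2 := pow_le_pow_of_le_one hq0.le hq1.le (by omega)
  clear_value a q
  have e1 : q ^ l = a * q := by
    rw [haa, ← pow_succ]
    congr 1
    omega
  have e2 : q ^ (l + 1) = a * q ^ 2 := by
    rw [haa, ← pow_add]
    congr 1
    omega
  have e3 : q ^ (2 * l) = (a * q) ^ 2 := by
    rw [← e1, ← pow_mul, Nat.mul_comm]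
  have e4 : q ^ (2 * (l + 1)) = (a * q ^ 2) ^ 2 := by
    rw [← e2, ← pow_mul, Nat.mul_comm]
  rw [e1, e2, e3, e4]
  have hd1 : 0 < 1 - a * q := by
    have : a * q < 1 := by
      rw [← e1]
      exact pow_lt_one₀ hq0.le hq1 (by omega)
    linarith
  have hd2 : 0 < 1 - a * q ^ 2 := by
    have : a * q ^ 2 < 1 := by
      rw [← e2]
      exact pow_lt_one₀ hq0.le hq1 (by omega)
    linarith
  rw [div_le_div_iff₀ (by positivity) (by positivity)]
  have hpq : p = 1 - q := by rw [hq]; ring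
  have hlcast : (3 : ℝ) ≤ (l : ℝ) := by exact_mod_cast hl
  have h2 : 2 ≤ p * ((l : ℝ) + 2) := by
    rw [div_le_iff₀ (by linarith : (0:ℝ) < (l : ℝ) + 2)] at hp
    linarith
  have hL2 : 2 * q ≤ (1 - q) * (l : ℝ) := by nlinarith
  have ha4 : a ^ 2 ≤ q ^ 4 := by nlinarith
  have hc : 0 ≤ 1 - a ^ 2 * q ^ 3 := by
    have h4 : a ^ 2 * q ^ 3 ≤ q ^ 4 * q ^ 3 :=
      mul_le_mul_of_nonneg_right ha4 (by positivity)
    nlinarith [pow_le_one₀ hq0.le hq1.le (n := 7)]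
  have h1 : 2 * q * (1 - a ^ 2 * q ^ 3) ≤ (1 - q) * (l : ℝ) * (1 - a ^ 2 * q ^ 3) :=
    mul_le_mul_of_nonneg_right hL2 hc
  have haq : a * q ≤ q ^ 3 := by
    calc a * q ≤ q ^ 2 * q := mul_le_mul_of_nonneg_right haq2 hq0.le
    _ = q ^ 3 := by ring
  have haq2' : a * q ^ 2 ≤ q ^ 4 := by
    calc a * q ^ 2 ≤ q ^ 2 * q ^ 2 := mul_le_mul_of_nonneg_right haq2 (by positivity)
    _ = q ^ 4 := by ring
  have hinner : 0 ≤ 3 + q - a * q * (1 + q) - 2 * (a * q ^ 2) := by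
    have hb : a * q * (1 + q) ≤ q ^ 3 * (1 + q) :=
      mul_le_mul_of_nonneg_right haq (by linarith)
    nlinarith [pow_le_one₀ hq0.le hq1.le (n := 3), pow_le_one₀ hq0.le hq1.le (n := 4)]
  have hbr2 : 0 ≤ a * q ^ 2 * (3 + q - a * q * (1 + q) - 2 * (a * q ^ 2)) :=
    mul_nonneg (by positivity) hinner
  have hE : 0 ≤ (1 - q) * (l : ℝ) * (1 - a ^ 2 * q ^ 3) - 2 * q
      + a * q ^ 2 * (3 + q) - a ^ 2 * q ^ 3 * (1 + q) := by
    have hEexpr : (1 - q) * (l : ℝ) * (1 - a ^ 2 * q ^ 3) - 2 * q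
        + a * q ^ 2 * (3 + q) - a ^ 2 * q ^ 3 * (1 + q)
        = ((1 - q) * (l : ℝ) * (1 - a ^ 2 * q ^ 3) - 2 * q * (1 - a ^ 2 * q ^ 3))
          + a * q ^ 2 * (3 + q - a * q * (1 + q) - 2 * (a * q ^ 2)) := by ring
    linarith [hEexpr]
  have key : (p * ((l : ℝ)) * a - a * q + (a * q) ^ 2) * (1 - a * q ^ 2) ^ 2
      - (p * ((l : ℝ) + 1) * (a * q) - a * q ^ 2 + (a * q ^ 2) ^ 2) * (1 - a * q) ^ 2
      = a * (1 - q) * ((1 - q) * (l : ℝ) * (1 - a ^ 2 * q ^ 3) - 2 * q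
        + a * q ^ 2 * (3 + q) - a ^ 2 * q ^ 3 * (1 + q)) := by
    rw [hpq]; ring
  linarith [key, mul_nonneg (mul_nonneg ha0.le (by linarith : (0:ℝ) ≤ 1 - q)) hE]
end

section
/- Let p ∈ (0,1) and let l ≥ 3 be a natural number with 2/(l+2) ≤ p < 1. With Pr(X=0|L=l) = (1 − (1-p)^l − p·l·(1-p)^{l-1}) / (1−(1-p)^l)^2, the inequality Pr(X=0|L=l+1) ≥ Pr(X=0|L=l) holds. -/
theorem nonoverlap_prob_nondecreasing (p : ℝ) (hp0 : 0 < p) (hp1 : p < 1)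
    (l : ℕ) (hl : 3 ≤ l) (hp : 2 / ((l : ℝ) + 2) ≤ p) :
    (1 - (1 - p) ^ (l + 1) - p * ((l : ℝ) + 1) * (1 - p) ^ l) /
        (1 - (1 - p) ^ (l + 1)) ^ 2 ≥
      (1 - (1 - p) ^ l - p * (l : ℝ) * (1 - p) ^ (l - 1)) /
        (1 - (1 - p) ^ l) ^ 2 := by
  set q : ℝ := 1 - p with hq_def
  have hq0 : 0 < q := by simp [hq_def]; linarith
  have hq1 : q < 1 := by simp [hq_def]; linarith
  set x : ℝ := q ^ (l - 1) with hx_def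
  have hx0 : 0 < x := pow_pos hq0 _
  have hl1 : l - 1 + 1 = l := by omega
  have hpl : q ^ l = x * q := by rw [hx_def, ← pow_succ, hl1]
  have hpl1 : q ^ (l + 1) = x * q ^ 2 := by rw [pow_succ, hpl]; ring
  have hxq2 : x ≤ q ^ 2 :=
    pow_le_pow_of_le_one hq0.le hq1.le (by omega)
  have hL : (3 : ℝ) ≤ (l : ℝ) := by exact_mod_cast hl
  have hlp : 2 * q ≤ (l : ℝ) * p := by
    have h2 : (0 : ℝ) < (l : ℝ) + 2 := by linarith
    rw [div_le_iff₀ h2] at hp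
    simp only [hq_def]; nlinarith
  have hq3 : q ^ 3 < 1 := by nlinarith
  have hq7 : q ^ 7 < 1 := by nlinarith [pow_pos hq0 3, pow_pos hq0 4, sq_nonneg (q^3-1)]
  have hd1 : 0 < 1 - x * q := by nlinarith
  have hd2 : 0 < 1 - x * q ^ 2 := by nlinarith
  rw [hpl, hpl1, ge_iff_le, div_le_div_iff₀ (by positivity) (by positivity)]
  have p1 : 0 ≤ p * ((q ^ 2 - x) * (x ^ 2 * q ^ 3) * (1 + q + (l : ℝ) * p)) := by
    have h0 : 0 ≤ 1 + q + (l : ℝ) * p := by positivity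
    have h1 : 0 ≤ q ^ 2 - x := by linarith
    positivity
  have p2 : 0 ≤ p * (((l : ℝ) * p - 2 * q) * x * (1 - x * q ^ 5)) := by
    have h1 : 0 ≤ (l : ℝ) * p - 2 * q := by linarith
    have h2 : 0 ≤ 1 - x * q ^ 5 := by nlinarith [pow_pos hq0 5, mul_le_mul_of_nonneg_right hxq2 (pow_pos hq0 5).le]
    positivity
  have p3 : 0 ≤ p * (x ^ 2 * (q ^ 2 - q ^ 5) * (3 + q)) := by
    have h1 : 0 ≤ q ^ 2 - q ^ 5 := by nlinarith
    positivity
  have p4 : 0 ≤ p * (2 * x ^ 2 * q ^ 5 * p) := by positivity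
  have hpq : p = 1 - q := by rw [hq_def]; ring
  have key : (1 - x * q ^ 2 - p * ((l : ℝ) + 1) * (x * q)) * (1 - x * q) ^ 2 -
      (1 - x * q - p * (l : ℝ) * x) * (1 - x * q ^ 2) ^ 2 =
      p * ((q ^ 2 - x) * (x ^ 2 * q ^ 3) * (1 + q + (l : ℝ) * p)) +
      p * (((l : ℝ) * p - 2 * q) * x * (1 - x * q ^ 5)) +
      p * (x ^ 2 * (q ^ 2 - q ^ 5) * (3 + q)) +
      p * (2 * x ^ 2 * q ^ 5 * p) := by
    rw [hpq]; ring
  linarith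
end

section
/- Let l ≥ 3 be a natural number and let p(l) ∈ [2/(l+2), 1) for each l. For each such l, Pr(X=1|L=l) ≤ Pr(X=0|L=l), where Pr(X=1|L=l) = Φ(l)^{-2}(p·l·(1-p)^{l-1} − (1-p)^l + (1-p)^{2l}) and Pr(X=0|L=l) = Φ(l)^{-2}(1 − (1-p)^l − p·l·(1-p)^{l-1}) with Φ(l) = 1−(1-p)^l and p = p(l). Consequently, for L drawn uniformly from {3,...,T} (T ≥ 3) and p = p(L) depending on L, the unconditional probabilities satisfy Pr(X=1) ≤ Pr(X=0). -/
/-!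
With `q = 1 - p`, the difference of the two conditional probabilities is `Φ(l)⁻² R` where
`R = 2 l (1 - q) q^(l-1) + q^(2l) - 1`. On `[0, (l-1)/l]` the map `q ↦ q^(l-1) (1 - q)` is
increasing, and `p ≥ 2/(l+2)` means `q ≤ q₀ := l/(l+2) < (l-1)/l`; at `q₀` the first term of `R`
equals `4 q₀^l`. The quadratic Bernoulli bound `(1 + 2/l)^l ≥ 13/3` gives `a := q₀^l ≤ 3/13`, hence
`R ≤ 4a + a² - 1 < 0`. Averaging the pointwise inequality over `l` gives the unconditional one.
-/

lemma one_add_mul_add_choose_two_mul_sq_le_pow {x : ℝ} (hx : 0 ≤ x) (n : ℕ) :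
    1 + n * x + n.choose 2 * x ^ 2 ≤ (1 + x) ^ n := by
  induction n with
  | zero => simp
  | succ n ih =>
    calc 1 + ↑(n + 1) * x + ↑((n + 1).choose 2) * x ^ 2
        ≤ (1 + n * x + n.choose 2 * x ^ 2) * (1 + x) := by
          rw [Nat.choose_succ_succ, Nat.choose_one_right]
          push_cast
          nlinarith [pow_nonneg hx 3, (n.choose 2).cast_nonneg (α := ℝ)]
      _ ≤ (1 + x) ^ (n + 1) := by
          rw [pow_succ]
          exact mul_le_mul_of_nonneg_right ih (by linarith)

lemma monotoneOn_pow_mul_one_sub (n : ℕ) :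
    MonotoneOn (fun x : ℝ ↦ x ^ n * (1 - x)) (Set.Icc 0 (n / (n + 1))) := by
  rintro x ⟨hx0, -⟩ y ⟨-, hy⟩ hxy
  rw [le_div_iff₀ (by positivity)] at hy
  rcases n with _ | n
  · simp only [CharP.cast_eq_zero] at hy
    simp only [pow_zero, one_mul]
    linarith
  push_cast at hy
  have hbern : x ^ (n + 1) + (n + 1) * x ^ n * (y - x) ≤ y ^ (n + 1) := by
    simpa using pow_add_mul_le_add_pow hx0 (by linarith : 0 ≤ 2 * x + (y - x)) (n + 1)
  have hgap : 0 ≤ x ^ n * (y - x) * ((n + 1) * (1 - y) - x) :=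
    mul_nonneg (mul_nonneg (pow_nonneg hx0 n) (sub_nonneg.2 hxy)) (by linarith)
  calc x ^ (n + 1) * (1 - x)
      ≤ x ^ (n + 1) * (1 - x) + x ^ n * (y - x) * ((n + 1) * (1 - y) - x) :=
        le_add_of_nonneg_right hgap
    _ = (x ^ (n + 1) + (n + 1) * x ^ n * (y - x)) * (1 - y) := by ring
    _ ≤ y ^ (n + 1) * (1 - y) := mul_le_mul_of_nonneg_right hbern (by nlinarith)

lemma one_sub_two_div_add_two_pow_le {l : ℕ} (hl : 3 ≤ l) :
    (1 - 2 / ((l : ℝ) + 2)) ^ l ≤ 3 / 13 := by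
  have hl' : (3 : ℝ) ≤ l := by exact_mod_cast hl
  have hbern := one_add_mul_add_choose_two_mul_sq_le_pow (x := 2 / (l : ℝ)) (by positivity) l
  rw [Nat.cast_choose_two] at hbern
  have hlarge : 13 / 3 ≤ (1 + 2 / (l : ℝ)) ^ l := by
    refine le_trans ?_ hbern
    field_simp
    nlinarith
  have hinv : (1 - 2 / ((l : ℝ) + 2)) ^ l * (1 + 2 / (l : ℝ)) ^ l = 1 := by
    rw [← mul_pow]; field_simp; simp [div_self (by positivity : (l : ℝ) ≠ 0)]
  nlinarith [pow_nonneg (by field_simp; linarith : (0 : ℝ) ≤ 1 - 2 / ((l : ℝ) + 2)) l]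

lemma two_mul_mul_pow_add_pow_le_one {l : ℕ} (hl : 3 ≤ l) {p : ℝ}
    (hp₀ : 2 / ((l : ℝ) + 2) ≤ p) (hp₁ : p ≤ 1) :
    2 * (p * l * (1 - p) ^ (l - 1)) + (1 - p) ^ (2 * l) ≤ 1 := by
  obtain ⟨n, rfl⟩ : ∃ n, l = n + 1 := ⟨l - 1, by omega⟩
  have hn : (2 : ℝ) ≤ n := by exact_mod_cast (by omega : 2 ≤ n)
  set q₀ : ℝ := 1 - 2 / ((n + 1 : ℕ) + 2) with hq₀
  have hq₀_le : q₀ ≤ n / (n + 1) := by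
    rw [hq₀, le_div_iff₀ (by positivity)]
    push_cast
    field_simp
    nlinarith
  have hq₀_nonneg : 0 ≤ q₀ := by rw [hq₀]; push_cast; field_simp; linarith
  have hq : 1 - p ≤ q₀ := by linarith
  have hmono := monotoneOn_pow_mul_one_sub n ⟨by linarith, hq.trans hq₀_le⟩
    ⟨hq₀_nonneg, hq₀_le⟩ hq
  have hsq : (1 - p) ^ (2 * (n + 1)) ≤ (q₀ ^ (n + 1)) ^ 2 := by
    rw [← pow_mul, mul_comm]
    exact pow_le_pow_left₀ (by linarith) hq _
  have hlin : 2 * (p * (n + 1 : ℕ) * (1 - p) ^ n) ≤ 4 * q₀ ^ (n + 1) := by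
    have : 2 * ((n + 1 : ℕ) : ℝ) * (1 - q₀) = 4 * q₀ := by rw [hq₀]; push_cast; field_simp; ring
    calc 2 * (p * (n + 1 : ℕ) * (1 - p) ^ n)
        = 2 * (n + 1 : ℕ) * ((1 - p) ^ n * (1 - (1 - p))) := by ring
      _ ≤ 2 * (n + 1 : ℕ) * (q₀ ^ n * (1 - q₀)) := mul_le_mul_of_nonneg_left hmono (by positivity)
      _ = 4 * q₀ ^ (n + 1) := by rw [pow_succ]; linear_combination q₀ ^ n * this
  have ha := one_sub_two_div_add_two_pow_le hl
  rw [← hq₀] at ha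
  simp only [Nat.add_sub_cancel]
  nlinarith [pow_nonneg hq₀_nonneg (n + 1)]

theorem overlap_le_nonoverlap (T : ℕ) (hT : 3 ≤ T) (p : ℕ → ℝ)
    (hp : ∀ l : ℕ, 3 ≤ l → 2 / ((l : ℝ) + 2) ≤ p l ∧ p l < 1) :
    (∀ l : ℕ, 3 ≤ l →
      (p l * (l : ℝ) * (1 - p l) ^ (l - 1) - (1 - p l) ^ l + (1 - p l) ^ (2 * l)) /
          (1 - (1 - p l) ^ l) ^ 2 ≤
        (1 - (1 - p l) ^ l - p l * (l : ℝ) * (1 - p l) ^ (l - 1)) /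
          (1 - (1 - p l) ^ l) ^ 2) ∧
    (1 / ((T : ℝ) - 2)) * ∑ l ∈ Finset.Icc 3 T,
        (p l * (l : ℝ) * (1 - p l) ^ (l - 1) - (1 - p l) ^ l + (1 - p l) ^ (2 * l)) /
          (1 - (1 - p l) ^ l) ^ 2 ≤
      (1 / ((T : ℝ) - 2)) * ∑ l ∈ Finset.Icc 3 T,
        (1 - (1 - p l) ^ l - p l * (l : ℝ) * (1 - p l) ^ (l - 1)) /
          (1 - (1 - p l) ^ l) ^ 2 := by
  have hpointwise : ∀ l : ℕ, 3 ≤ l →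
      (p l * (l : ℝ) * (1 - p l) ^ (l - 1) - (1 - p l) ^ l + (1 - p l) ^ (2 * l)) /
          (1 - (1 - p l) ^ l) ^ 2 ≤
        (1 - (1 - p l) ^ l - p l * (l : ℝ) * (1 - p l) ^ (l - 1)) /
          (1 - (1 - p l) ^ l) ^ 2 := by
    intro l hl
    have hR := two_mul_mul_pow_add_pow_le_one hl (hp l hl).1 (hp l hl).2.le
    exact div_le_div_of_nonneg_right (by linarith) (sq_nonneg _)
  have hT' : (3 : ℝ) ≤ T := by exact_mod_cast hT
  refine ⟨hpointwise, mul_le_mul_of_nonneg_left ?_ (by rw [one_div_nonneg]; linarith)⟩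
  exact Finset.sum_le_sum fun l hl ↦ hpointwise l (Finset.mem_Icc.1 hl).1
end
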